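/- arXiv:2110.10375 — 5 statements merged into one kernel-verified Lean document; each statement's English description precedes it below -/
import Mathlib

section
/- Let b, c > 0 and define the Hybrid(b,c) distribution by the CDF F(x) = (b/(2(b+c)))·e^{(x+c)/b} for x < -c, F(x) = (x+c)/(2(b+c)) + b/(2(b+c)) for -c ≤ x < c, and F(x) = 1 - (b/(2(b+c)))·e^{-(x-c)/b} for x ≥ c. Then for any real t with |t| < 1/b, the moment generating function of X ~ Hybrid(b,c) equals E[e^{tX}] = (1/(2(b+c)))·( e^{-ct}/(1/b+t) + (e^{ct}-e^{-ct})/t + e^{ct}/(1/b-t) ). -/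
open MeasureTheory Real

/-- Density of the Hybrid(b,c) distribution: uniform on [-c,c] with Laplace tails of scale b. -/
noncomputable def hybridDensity (b c : ℝ) (x : ℝ) : ℝ :=
  if x < -c then (1 / (2 * (b + c))) * Real.exp ((x + c) / b)
  else if x ≤ c then 1 / (2 * (b + c))
  else (1 / (2 * (b + c))) * Real.exp (-(x - c) / b)

open Set in
lemma aux_integrableOn_Ioi {a : ℝ} (ha : 0 < a) (r : ℝ) :
    IntegrableOn (fun x : ℝ => Real.exp (-(a * x))) (Ioi r) := by
  simpa [neg_mul] using exp_neg_integrableOn_Ioi r ha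

open Set in
lemma aux_integral_Ioi {a : ℝ} (ha : 0 < a) (r : ℝ) :
    ∫ x in Ioi r, Real.exp (-(a * x)) = Real.exp (-(a * r)) / a := by
  have h := integral_comp_mul_left_Ioi (fun y => Real.exp (-y)) r ha
  simp only [smul_eq_mul] at h
  rw [h, integral_exp_neg_Ioi, div_eq_inv_mul]

open Set in
lemma aux_integrableOn_Iic {a : ℝ} (ha : 0 < a) (r : ℝ) :
    IntegrableOn (fun x : ℝ => Real.exp (a * x)) (Iic r) := by
  have h := (MeasurePreserving.integrableOn_comp_preimage
      (Measure.measurePreserving_neg (volume : Measure ℝ))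
      (Homeomorph.neg ℝ).measurableEmbedding
      (f := fun x : ℝ => Real.exp (a * x)) (s := Iic r)).mp
  have hpre : (fun x : ℝ => -x) ⁻¹' Iic r = Ici (-r) := by
    ext x; simp [neg_le]
  have hint : IntegrableOn (fun x : ℝ => Real.exp (-(a * x))) (Ici (-r)) := by
    rw [integrableOn_Ici_iff_integrableOn_Ioi]
    exact aux_integrableOn_Ioi ha _
  have := h (by
    rw [hpre]
    refine hint.congr_fun (fun x _ => ?_) measurableSet_Ici
    simp [Function.comp, mul_neg])
  exact this

open Set in
lemma aux_integral_Iic {a : ℝ} (ha : 0 < a) (r : ℝ) :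
    ∫ x in Iic r, Real.exp (a * x) = Real.exp (a * r) / a := by
  have h := integral_comp_neg_Iic r (fun y => Real.exp (-(a * y)))
  simp only [mul_neg, neg_neg] at h
  rw [h, aux_integral_Ioi ha, mul_neg, neg_neg]

open Set in
/-- MGF of the Hybrid(b,c) distribution for |t| < 1/b. -/
theorem stmt0 (b c t : ℝ) (hb : 0 < b) (hc : 0 < c) (ht : |t| < 1 / b) (ht0 : t ≠ 0) :
    ∫ x : ℝ, Real.exp (t * x) * hybridDensity b c x =
      (1 / (2 * (b + c))) * (Real.exp (-c * t) / (1 / b + t)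
        + (Real.exp (c * t) - Real.exp (-c * t)) / t
        + Real.exp (c * t) / (1 / b - t)) := by
  set K : ℝ := 1 / (2 * (b + c)) with hK
  have hb' : b ≠ 0 := hb.ne'
  have ha1 : 0 < t + 1 / b := by
    have := abs_lt.mp ht
    linarith [this.1]
  have ha2 : 0 < 1 / b - t := by
    have := abs_lt.mp ht
    linarith [this.2]
  have hcc : -c ≤ c := by linarith
  set f : ℝ → ℝ := fun x => Real.exp (t * x) * hybridDensity b c x with hf
  -- the three regions
  have hEq1 : EqOn f (fun x => (K * Real.exp (c / b)) * Real.exp ((t + 1 / b) * x)) (Iic (-c)) := by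
    intro x hx
    simp only [mem_Iic] at hx
    have hform : Real.exp (t * x) * (K * Real.exp ((x + c) / b))
        = K * Real.exp (c / b) * Real.exp ((t + 1 / b) * x) := by
      rw [mul_comm (Real.exp (t * x)), mul_assoc, mul_assoc, ← Real.exp_add, ← Real.exp_add]
      congr 1
      field_simp
      ring
    rcases lt_or_eq_of_le hx with h | h
    · simp only [hf, hybridDensity, if_pos h]
      exact hform
    · have h1 : ¬ x < -c := by simp [h]
      have h2 : x ≤ c := by rw [h]; exact hcc
      simp only [hf, hybridDensity, if_neg h1, if_pos h2]
      rw [show Real.exp (t * x) * K = Real.exp (t * x) * (K * Real.exp ((x + c) / b)) by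
        rw [h]; simp, hform]
  have hEq2 : EqOn f (fun x => K * Real.exp (t * x)) (Icc (-c) c) := by
    intro x hx
    have h1 : ¬ x < -c := not_lt.mpr hx.1
    simp only [hf, hybridDensity, if_neg h1, if_pos hx.2]
    ring
  have hEq3 : EqOn f (fun x => (K * Real.exp (c / b)) * Real.exp (-((1 / b - t) * x))) (Ioi c) := by
    intro x hx
    simp only [mem_Ioi] at hx
    have h1 : ¬ x < -c := by push_neg; linarith
    have h2 : ¬ x ≤ c := not_le.mpr hx
    simp only [hf, hybridDensity, if_neg h1, if_neg h2]
    rw [mul_comm (Real.exp (t * x)), mul_assoc, mul_assoc, ← Real.exp_add, ← Real.exp_add]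
    congr 2
    field_simp
    ring
  -- integrability
  have hg1 : IntegrableOn (fun x => (K * Real.exp (c / b)) * Real.exp ((t + 1 / b) * x))
      (Iic (-c)) := (aux_integrableOn_Iic ha1 (-c)).const_mul _
  have hI1 : IntegrableOn f (Iic (-c)) := hg1.congr_fun (fun x hx => (hEq1 hx).symm) measurableSet_Iic
  have hg2 : IntegrableOn (fun x => K * Real.exp (t * x)) (Ioc (-c) c) := by
    apply Continuous.integrableOn_Ioc
    exact continuous_const.mul (Real.continuous_exp.comp (continuous_const.mul continuous_id))
  have hI2 : IntegrableOn f (Ioc (-c) c) :=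
    hg2.congr_fun (fun x hx => (hEq2 (Ioc_subset_Icc_self hx)).symm) measurableSet_Ioc
  have hg3 : IntegrableOn (fun x => (K * Real.exp (c / b)) * Real.exp (-((1 / b - t) * x)))
      (Ioi c) := (aux_integrableOn_Ioi ha2 c).const_mul _
  have hI3 : IntegrableOn f (Ioi c) := hg3.congr_fun (fun x hx => (hEq3 hx).symm) measurableSet_Ioi
  have hIic : IntegrableOn f (Iic c) := by
    have := hI1.union hI2
    rwa [Iic_union_Ioc_eq_Iic hcc] at this
  -- split the integral
  have hsplit1 : (∫ x, f x) = (∫ x in Iic c, f x) + ∫ x in Ioi c, f x :=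
    (intervalIntegral.integral_Iic_add_Ioi hIic hI3).symm
  have hsplit2 : (∫ x in Iic c, f x) = (∫ x in Iic (-c), f x) + ∫ x in (-c : ℝ)..c, f x := by
    have := intervalIntegral.integral_Iic_sub_Iic hI1 hIic
    linarith [this]
  -- compute each piece
  have hInt1 : (∫ x in Iic (-c), f x) = K * Real.exp (-c * t) / (1 / b + t) := by
    rw [setIntegral_congr_fun measurableSet_Iic hEq1, integral_const_mul,
      aux_integral_Iic ha1]
    have hx : Real.exp (c / b) * Real.exp ((t + 1 / b) * -c) = Real.exp (-c * t) := by
      rw [← Real.exp_add]; congr 1; field_simp; ring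
    calc K * Real.exp (c / b) * (Real.exp ((t + 1 / b) * -c) / (t + 1 / b))
        = K * (Real.exp (c / b) * Real.exp ((t + 1 / b) * -c)) / (t + 1 / b) := by ring
      _ = K * Real.exp (-c * t) / (1 / b + t) := by rw [hx, add_comm t (1 / b)]
  have hInt2 : (∫ x in (-c : ℝ)..c, f x)
      = K * ((Real.exp (c * t) - Real.exp (-c * t)) / t) := by
    rw [intervalIntegral.integral_congr (g := fun x => K * Real.exp (t * x)) ?_]
    · rw [intervalIntegral.integral_const_mul]
      have : (∫ x in (-c : ℝ)..c, Real.exp (t * x)) = t⁻¹ • ∫ x in (t * -c)..(t * c), Real.exp x :=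
        intervalIntegral.integral_comp_mul_left Real.exp ht0
      rw [this, integral_exp, smul_eq_mul]
      rw [show t * -c = -c * t by ring, show t * c = c * t by ring]
      ring
    · rwa [Set.uIcc_of_le hcc]
  have hInt3 : (∫ x in Ioi c, f x) = K * Real.exp (c * t) / (1 / b - t) := by
    rw [setIntegral_congr_fun measurableSet_Ioi hEq3, integral_const_mul,
      aux_integral_Ioi ha2]
    have hx : Real.exp (c / b) * Real.exp (-((1 / b - t) * c)) = Real.exp (c * t) := by
      rw [← Real.exp_add]; congr 1; field_simp; ring
    calc K * Real.exp (c / b) * (Real.exp (-((1 / b - t) * c)) / (1 / b - t))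
        = K * (Real.exp (c / b) * Real.exp (-((1 / b - t) * c))) / (1 / b - t) := by ring
      _ = K * Real.exp (c * t) / (1 / b - t) := by rw [hx]
  calc ∫ x, f x = K * Real.exp (-c * t) / (1 / b + t)
        + K * ((Real.exp (c * t) - Real.exp (-c * t)) / t)
        + K * Real.exp (c * t) / (1 / b - t) := by
        rw [hsplit1, hsplit2, hInt1, hInt2, hInt3]
    _ = K * (Real.exp (-c * t) / (1 / b + t)
        + (Real.exp (c * t) - Real.exp (-c * t)) / t
        + Real.exp (c * t) / (1 / b - t)) := by ring
end

section
/- Let g: ℝ → ℝ be continuous and bounded, with g(x) ≥ δ > 0 for x > K and g(x) ≤ -δ for x < -K. Let X be a random variable with density ρ(x) = C·e^{-G(x)} where G(x) = ∫₀ˣ g(t)dt and C normalizes ρ. Then for every ω ∈ ℝ, E[e^{jωX} g(X)] = jω·E[e^{jωX}], i.e., the Gibbs distribution satisfies the characteristic-function functional equation E[g(X)cos(ωX)] = -ω·E[sin(ωX)] and E[g(X)sin(ωX)] = ω·E[cos(ωX)]. -/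
open MeasureTheory Real Set Filter Topology

/-!
Integrating by parts against the Gibbs weight `ρ = C e^{-G}`, `G x = ∫₀ˣ g`, whose derivative is
`-g ρ`, gives `∫ g φ ρ = ∫ φ' ρ` for every bounded `C¹` function `φ` with bounded derivative; the
boundary terms vanish because `ρ` is integrable. Integrability comes from the drift condition on
`g`, which makes `G` grow at least like `δ |x|`. Taking `φ x = cos (ω x)` and `φ x = sin (ω x)`
gives the two identities.
-/

section Coercivity

variable {g : ℝ → ℝ} {M δ K : ℝ}

lemma mul_sub_le_integral_of_nonneg (hg : Continuous g) (hgb : ∀ t, |g t| ≤ M) (hδ : 0 ≤ δ)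
    (hK : 0 ≤ K) (hpos : ∀ t > K, δ ≤ g t) {x : ℝ} (hx : 0 ≤ x) :
    δ * x - (M + δ) * K ≤ ∫ t in (0:ℝ)..x, g t := by
  set m := min x K
  have hm : 0 ≤ m := le_min hx hK
  have hM : 0 ≤ M := (abs_nonneg _).trans (hgb 0)
  have hhead : -(M * m) ≤ ∫ t in (0:ℝ)..m, g t := by
    have h := intervalIntegral.norm_integral_le_of_norm_le_const (a := 0) (b := m) (f := g)
      fun t _ => hgb t
    rw [sub_zero, Real.norm_eq_abs, abs_of_nonneg hm] at h
    exact (abs_le.mp h).1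
  have htail : δ * (x - m) ≤ ∫ t in m..x, g t := by
    have h := intervalIntegral.integral_mono_on_of_le_Ioo (min_le_left x K)
      (intervalIntegrable_const (μ := volume)) (hg.intervalIntegrable m x) fun t ht =>
        hpos t ((min_lt_iff.mp ht.1).resolve_left ht.2.not_gt)
    simpa [mul_comm] using h
  rw [← intervalIntegral.integral_add_adjacent_intervals (hg.intervalIntegrable 0 m)
    (hg.intervalIntegrable m x)]
  nlinarith [min_le_right x K]

lemma mul_abs_sub_le_integral (hg : Continuous g) (hgb : ∀ t, |g t| ≤ M) (hδ : 0 ≤ δ)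
    (hK : 0 ≤ K) (hpos : ∀ t > K, δ ≤ g t) (hneg : ∀ t < -K, g t ≤ -δ) (x : ℝ) :
    δ * |x| - (M + δ) * K ≤ ∫ t in (0:ℝ)..x, g t := by
  rcases le_total 0 x with hx | hx
  · rw [abs_of_nonneg hx]
    exact mul_sub_le_integral_of_nonneg hg hgb hδ hK hpos hx
  · -- `t ↦ -g (-t)` satisfies the same hypotheses and has primitive `y ↦ G (-y)`.
    have h := mul_sub_le_integral_of_nonneg (g := fun t => -g (-t)) (by fun_prop)
      (fun t => by simpa using hgb (-t)) hδ hK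
      (fun t ht => by linarith [hneg (-t) (by linarith)]) (neg_nonneg.mpr hx)
    rw [intervalIntegral.integral_neg, intervalIntegral.integral_comp_neg, neg_neg, neg_zero,
      intervalIntegral.integral_symm, neg_neg] at h
    rwa [abs_of_nonpos hx]

lemma integrable_exp_neg_mul_abs (hδ : 0 < δ) : Integrable fun x : ℝ => exp (-(δ * |x|)) := by
  rw [← integrableOn_univ, ← Iic_union_Ioi (a := (0:ℝ)), integrableOn_union]
  constructor
  · refine (integrableOn_exp_mul_Iic hδ 0).congr_fun (fun x hx => ?_) measurableSet_Iic
    rw [abs_of_nonpos hx, mul_neg, neg_neg]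
  · refine (exp_neg_integrableOn_Ioi 0 hδ).congr_fun (fun x hx => ?_) measurableSet_Ioi
    simp only [abs_of_pos (show (0:ℝ) < x from hx), neg_mul]

lemma integrable_exp_neg_integral (hg : Continuous g) (hgb : ∀ t, |g t| ≤ M) (hδ : 0 < δ)
    (hK : 0 ≤ K) (hpos : ∀ t > K, δ ≤ g t) (hneg : ∀ t < -K, g t ≤ -δ) :
    Integrable fun x => exp (-(∫ t in (0:ℝ)..x, g t)) := by
  have hG : Continuous fun x => ∫ t in (0:ℝ)..x, g t :=
    intervalIntegral.continuous_primitive (fun _ _ => hg.intervalIntegrable _ _) 0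
  refine ((integrable_exp_neg_mul_abs hδ).const_mul (exp ((M + δ) * K))).mono'
    (by fun_prop) (Eventually.of_forall fun x => ?_)
  rw [Real.norm_eq_abs, abs_exp, ← exp_add]
  exact exp_le_exp.mpr (by linarith [mul_abs_sub_le_integral hg hgb hδ.le hK hpos hneg x])

end Coercivity

lemma integral_mul_mul_exp_neg_integral_eq {g φ φ' : ℝ → ℝ} {M B B' : ℝ} (hg : Continuous g)
    (hgb : ∀ t, |g t| ≤ M) (hρ : Integrable fun x => exp (-(∫ t in (0:ℝ)..x, g t)))
    (hφ : ∀ x, HasDerivAt φ (φ' x) x) (hφ' : Continuous φ') (hφb : ∀ x, |φ x| ≤ B)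
    (hφ'b : ∀ x, |φ' x| ≤ B') (C : ℝ) :
    ∫ x, g x * φ x * (C * exp (-(∫ t in (0:ℝ)..x, g t))) =
      ∫ x, φ' x * (C * exp (-(∫ t in (0:ℝ)..x, g t))) := by
  set ρ := fun x => C * exp (-(∫ t in (0:ℝ)..x, g t))
  have hρ' : ∀ x, HasDerivAt ρ (C * (exp (-(∫ t in (0:ℝ)..x, g t)) * -g x)) x := fun x =>
    (hg.integral_hasStrictDerivAt 0 x).hasDerivAt.neg.exp.const_mul C
  have hφc : Continuous φ := continuous_iff_continuousAt.mpr fun x => (hφ x).continuousAt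
  have hbdd : ∀ f : ℝ → ℝ, Continuous f → ∀ c, (∀ x, |f x| ≤ c) →
      Integrable fun x => f x * ρ x := fun f hf c hfc =>
    (hρ.const_mul C).bdd_mul hf.aestronglyMeasurable (Eventually.of_forall hfc)
  have hparts := integral_mul_deriv_eq_deriv_mul_of_integrable (fun x _ => hφ x)
    (fun x _ => hρ' x)
    ((hbdd (fun x => -(φ x * g x)) (by fun_prop) (B * M) fun x => by
      rw [abs_neg, abs_mul]
      exact mul_le_mul (hφb x) (hgb x) (abs_nonneg _) ((abs_nonneg _).trans (hφb x))).congr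
      (Eventually.of_forall fun x => by simp only [ρ, Pi.mul_apply]; ring))
    (hbdd φ' hφ' B' hφ'b) (hbdd φ hφc B hφb)
  rw [← neg_eq_iff_eq_neg, ← integral_neg] at hparts
  rw [← hparts]
  congr 1 with x
  ring

theorem stmt5_general (g : ℝ → ℝ) (gmax δ K : ℝ) (hg : Continuous g)
    (hgb : ∀ x, |g x| ≤ gmax) (hδ : 0 < δ) (hK : 0 < K)
    (hpos : ∀ x > K, δ ≤ g x) (hneg : ∀ x < -K, g x ≤ -δ)
    (C : ℝ) (ω : ℝ) :
    (∫ x : ℝ, g x * Real.cos (ω * x) * (C * Real.exp (-(∫ t in (0:ℝ)..x, g t)))) =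
      -ω * ∫ x : ℝ, Real.sin (ω * x) * (C * Real.exp (-(∫ t in (0:ℝ)..x, g t))) ∧
    (∫ x : ℝ, g x * Real.sin (ω * x) * (C * Real.exp (-(∫ t in (0:ℝ)..x, g t)))) =
      ω * ∫ x : ℝ, Real.cos (ω * x) * (C * Real.exp (-(∫ t in (0:ℝ)..x, g t))) := by
  have hρ := integrable_exp_neg_integral hg hgb hδ hK.le hpos hneg
  have hlin : ∀ x, HasDerivAt (fun x => ω * x) ω x := fun x => by
    simpa using (hasDerivAt_id x).const_mul ω
  have hbound : ∀ a : ℝ, |a| ≤ 1 → |a * ω| ≤ |ω| := fun a ha => by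
    rw [abs_mul]
    exact mul_le_of_le_one_left (abs_nonneg ω) ha
  constructor
  · rw [integral_mul_mul_exp_neg_integral_eq hg hgb hρ (fun x => (hlin x).cos) (by fun_prop)
      (fun x => abs_cos_le_one _) (fun x => hbound _ ((abs_neg _).trans_le (abs_sin_le_one _))),
      ← integral_const_mul]
    congr 1 with x
    ring
  · rw [integral_mul_mul_exp_neg_integral_eq hg hgb hρ (fun x => (hlin x).sin) (by fun_prop)
      (fun x => abs_sin_le_one _) (fun x => hbound _ (abs_cos_le_one _)), ← integral_const_mul]
    congr 1 with x
    ring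

/-- The Gibbs distribution with density C·e^{-∫₀ˣ g} satisfies the characteristic-function
functional equation E[e^{jωX} g(X)] = jω E[e^{jωX}], stated via its real and imaginary parts:
E[g(X)cos(ωX)] = -ω E[sin(ωX)] and E[g(X)sin(ωX)] = ω E[cos(ωX)]. -/
theorem stmt5 (g : ℝ → ℝ) (gmax δ K : ℝ) (hg : Continuous g)
    (hgb : ∀ x, |g x| ≤ gmax) (hδ : 0 < δ) (hK : 0 < K)
    (hpos : ∀ x > K, δ ≤ g x) (hneg : ∀ x < -K, g x ≤ -δ)
    (C : ℝ) (hC : C = (∫ x : ℝ, Real.exp (-(∫ t in (0:ℝ)..x, g t)))⁻¹) (ω : ℝ) :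
    (∫ x : ℝ, g x * Real.cos (ω * x) * (C * Real.exp (-(∫ t in (0:ℝ)..x, g t)))) =
      -ω * ∫ x : ℝ, Real.sin (ω * x) * (C * Real.exp (-(∫ t in (0:ℝ)..x, g t))) ∧
    (∫ x : ℝ, g x * Real.sin (ω * x) * (C * Real.exp (-(∫ t in (0:ℝ)..x, g t)))) =
      ω * ∫ x : ℝ, Real.cos (ω * x) * (C * Real.exp (-(∫ t in (0:ℝ)..x, g t))) :=
  stmt5_general g gmax δ K hg hgb hδ hK hpos hneg C ω
end

section
/- Suppose (Z_η) is a family of real random variables such that lim_{η→∞} E[e^{jω|Z_η|}] = 1/(1 - jω·b) for all ω ∈ ℝ (where b > 0) and lim_{η→∞} E[sgn(Z_η)·e^{jω|Z_η|}] = 0 for all ω ∈ ℝ. Then lim_{η→∞} E[e^{jωZ_η}] = 1/(1 + ω²b²), which is the characteristic function of the Laplace(0, b) distribution; hence Z_η converges in distribution to Laplace(0, b). -/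
open MeasureTheory Filter Complex

/-!
Split `e^{jωx}` according to the sign of `x`: with `s = sgn x`,
`e^{jωx} = ½ (e^{jω|x|} + e^{-jω|x|}) + ½ s (e^{jω|x|} - e^{-jω|x|})`.
Taking expectations, the first half tends to `½ (1/(1 - jωb) + 1/(1 + jωb)) = 1/(1 + ω²b²)`
and the second half to `0`.
-/

lemma norm_exp_I_mul_ofReal_mul (ω x : ℝ) : ‖exp (I * ω * x)‖ = 1 := by
  rw [mul_assoc, ← ofReal_mul, norm_exp_I_mul_ofReal]

lemma exp_I_mul_eq_sign_mul_abs (ω x : ℝ) :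
    exp (I * ω * x) =
      (1 / 2 : ℂ) * (exp (I * ω * |x|) + exp (I * (-ω : ℝ) * |x|))
        + (1 / 2 : ℂ) * ((if 0 ≤ x then (1 : ℂ) else -1) * exp (I * ω * |x|)
          - (if 0 ≤ x then (1 : ℂ) else -1) * exp (I * (-ω : ℝ) * |x|)) := by
  rcases le_or_gt 0 x with hx | hx
  · simp only [abs_of_nonneg hx, if_pos hx]
    ring
  · simp only [abs_of_neg hx, if_neg hx.not_ge, ofReal_neg, mul_neg, neg_mul, neg_neg]
    ring

lemma inv_one_sub_I_mul_add_inv_one_add_I_mul (ω b : ℝ) :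
    (1 / 2 : ℂ) * (1 / (1 - I * ω * b) + 1 / (1 - I * (-ω : ℝ) * b))
      = ((1 / (1 + ω ^ 2 * b ^ 2) : ℝ) : ℂ) := by
  have hre : ∀ c : ℂ, c.re = 0 → (1 : ℂ) - c ≠ 0 := fun c hc h => by
    simpa [hc] using congrArg re h
  have h₁ : 1 - I * ω * b ≠ 0 := hre _ (by simp)
  have h₂ : 1 - I * (-ω : ℝ) * b ≠ 0 := hre _ (by simp)
  have hprod : (1 - I * ω * b) * (1 - I * (-ω : ℝ) * b) = ((1 + ω ^ 2 * b ^ 2 : ℝ) : ℂ) := by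
    push_cast
    ring_nf
    rw [I_sq]
    ring
  rw [div_add_div _ _ h₁ h₂, hprod]
  push_cast
  ring

section Integrals

variable {Ω : Type*} [MeasurableSpace Ω] {μ : Measure Ω} [IsFiniteMeasure μ]

lemma integrable_exp_I_mul {X : Ω → ℝ} (hX : Measurable X) (ω : ℝ) :
    Integrable (fun a => exp (I * ω * X a)) μ :=
  Integrable.of_bound (by fun_prop) 1
    (ae_of_all _ fun a => (norm_exp_I_mul_ofReal_mul ω (X a)).le)

lemma integrable_sign_mul_exp_I_mul_abs {X : Ω → ℝ} (hX : Measurable X) (ω : ℝ) :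
    Integrable (fun a => (if 0 ≤ X a then (1 : ℂ) else -1) * exp (I * ω * |X a|)) μ :=
  (integrable_exp_I_mul hX.abs ω).bdd_mul
    (Measurable.ite (measurableSet_le measurable_const hX) measurable_const
      measurable_const).aestronglyMeasurable
    (c := 1) (ae_of_all _ fun a => by split_ifs <;> norm_num)

lemma integral_exp_I_mul_eq_sign_mul_abs {X : Ω → ℝ} (hX : Measurable X) (ω : ℝ) :
    ∫ a, exp (I * ω * X a) ∂μ =
      (1 / 2 : ℂ) * ((∫ a, exp (I * ω * |X a|) ∂μ) + ∫ a, exp (I * (-ω : ℝ) * |X a|) ∂μ)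
        + (1 / 2 : ℂ) * ((∫ a, (if 0 ≤ X a then (1 : ℂ) else -1) * exp (I * ω * |X a|) ∂μ)
          - ∫ a, (if 0 ≤ X a then (1 : ℂ) else -1) * exp (I * (-ω : ℝ) * |X a|) ∂μ) := by
  have hc := integrable_exp_I_mul (μ := μ) hX.abs
  have hs := integrable_sign_mul_exp_I_mul_abs (μ := μ) hX
  conv_lhs => enter [2, a]; rw [exp_I_mul_eq_sign_mul_abs ω (X a)]
  rw [integral_add, integral_const_mul, integral_const_mul, integral_add (hc ω) (hc (-ω)),
    integral_sub (hs ω) (hs (-ω))]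
  exacts [((hc ω).add (hc (-ω))).const_mul _, ((hs ω).sub (hs (-ω))).const_mul _]

end Integrals

theorem stmt11_general {Ω : Type*} [MeasurableSpace Ω] (μ : Measure Ω) [IsProbabilityMeasure μ]
    (b : ℝ) (Z : ℝ → Ω → ℝ) (hZ : ∀ η, Measurable (Z η))
    (h1 : ∀ ω : ℝ, Tendsto (fun η => ∫ a, Complex.exp (Complex.I * ω * |Z η a|) ∂μ)
      atTop (nhds (1 / (1 - Complex.I * ω * b))))
    (h2 : ∀ ω : ℝ, Tendsto
      (fun η => ∫ a, (if 0 ≤ Z η a then (1:ℂ) else -1) * Complex.exp (Complex.I * ω * |Z η a|) ∂μ)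
      atTop (nhds 0)) :
    ∀ ω : ℝ, Tendsto (fun η => ∫ a, Complex.exp (Complex.I * ω * Z η a) ∂μ)
      atTop (nhds ((1 / (1 + ω ^ 2 * b ^ 2) : ℝ) : ℂ)) := by
  intro ω
  simp_rw [integral_exp_I_mul_eq_sign_mul_abs (hZ _) ω]
  have hlim := (((h1 ω).add (h1 (-ω))).const_mul (1 / 2)).add
    (((h2 ω).sub (h2 (-ω))).const_mul (1 / 2))
  rwa [sub_zero, mul_zero, add_zero, inv_one_sub_I_mul_add_inv_one_add_I_mul] at hlim

/-- If E[e^{jω|Z_η|}] → 1/(1 - jωb) and E[sgn(Z_η)e^{jω|Z_η|}] → 0 for all ω, then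
E[e^{jωZ_η}] → 1/(1 + ω²b²), the characteristic function of Laplace(0,b); hence
Z_η converges in distribution to Laplace(0,b). -/
theorem stmt11 {Ω : Type*} [MeasurableSpace Ω] (μ : Measure Ω) [IsProbabilityMeasure μ]
    (b : ℝ) (hb : 0 < b) (Z : ℝ → Ω → ℝ) (hZ : ∀ η, Measurable (Z η))
    (h1 : ∀ ω : ℝ, Tendsto (fun η => ∫ a, Complex.exp (Complex.I * ω * |Z η a|) ∂μ)
      atTop (nhds (1 / (1 - Complex.I * ω * b))))
    (h2 : ∀ ω : ℝ, Tendsto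
      (fun η => ∫ a, (if 0 ≤ Z η a then (1:ℂ) else -1) * Complex.exp (Complex.I * ω * |Z η a|) ∂μ)
      atTop (nhds 0)) :
    ∀ ω : ℝ, Tendsto (fun η => ∫ a, Complex.exp (Complex.I * ω * Z η a) ∂μ)
      atTop (nhds ((1 / (1 + ω ^ 2 * b ^ 2) : ℝ) : ℂ)) :=
  stmt11_general μ b Z hZ h1 h2
end

section
/- Consider the positive-recurrent imbalance chain z(k+1) = z(k) + a^c(z(k),k) - a^s(z(k),k) on ℤ, where given z(k)=z, the arrivals satisfy E[a^c(z,k)] = λ* + ε·φ^c(z/τ), E[a^s(z,k)] = λ* + ε·φ^s(z/τ), |a^c|,|a^s| ≤ A_max a.s., with φ^c, φ^s bounded by φ_max and satisfying the negative drift condition (there exist δ, K > 0 with φ^c(x)-φ^s(x) < -δ for x > K and > δ for x < -K). Let z̄ be a steady-state random variable and z̄⁺ its one-step update. Then E[z̄⁺·(sgn(z̄⁺) - sgn(z̄))] = -ε·E[(φ^c(z̄/τ) - φ^s(z̄/τ))·sgn(z̄)]. -/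
/-!
Since `z̄⁺` and `z̄` have the same law, `E|z̄⁺| = E|z̄|`, so the left-hand side reduces to
`-E[(z̄⁺ - z̄) sgn z̄] = -E[(a^c - a^s) sgn z̄]`. Conditioning on the countably many values of `z̄`
replaces `a^c - a^s` by its conditional mean `ε (φ^c - φ^s)(z̄ / τ)`.
-/

open MeasureTheory ProbabilityTheory

section

variable {Ω α : Type*} [MeasurableSpace Ω] [MeasurableSpace α] {μ : Measure Ω}

theorem integral_eq_tsum_setIntegral_fiber [Countable α] [MeasurableSingletonClass α]
    {X : Ω → α} (hX : Measurable X) {g : Ω → ℝ} (hg : Integrable g μ) :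
    ∫ a, g a ∂μ = ∑' i, ∫ a in X ⁻¹' {i}, g a ∂μ := by
  have hcover : (⋃ i, X ⁻¹' {i}) = Set.univ := by ext; simp
  rw [← integral_iUnion (fun i => hX (measurableSet_singleton i)) (pairwise_disjoint_fiber X)
    (hcover ▸ hg.integrableOn), hcover, setIntegral_univ]

/-- The tower property `E[g s(X)] = E[E[g | X] s(X)]` for countably-valued `X`, with
`m i` playing the role of `E[g | X = i]`. -/
theorem integral_mul_comp_eq_of_setIntegral_fiber [Countable α] [MeasurableSingletonClass α]
    {X : Ω → α} (hX : Measurable X) {g : Ω → ℝ} {m s : α → ℝ} {C : ℝ}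
    (hg : Integrable g μ) (hm : Integrable (fun a => m (X a)) μ) (hs : ∀ i, ‖s i‖ ≤ C)
    (hfiber : ∀ i, ∫ a in X ⁻¹' {i}, g a ∂μ = m i * μ.real (X ⁻¹' {i})) :
    ∫ a, g a * s (X a) ∂μ = ∫ a, m (X a) * s (X a) ∂μ := by
  have hsX : AEStronglyMeasurable (fun a => s (X a)) μ :=
    ((measurable_of_countable s).comp hX).aestronglyMeasurable
  rw [integral_eq_tsum_setIntegral_fiber hX (hg.mul_bdd hsX (.of_forall fun a => hs (X a))),
    integral_eq_tsum_setIntegral_fiber hX (hm.mul_bdd hsX (.of_forall fun a => hs (X a)))]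
  refine tsum_congr fun i => ?_
  have hXi : MeasurableSet (X ⁻¹' {i}) := hX (measurableSet_singleton i)
  have hfreeze (h : Ω → ℝ) :
      ∫ a in X ⁻¹' {i}, h a * s (X a) ∂μ = ∫ a in X ⁻¹' {i}, h a * s i ∂μ :=
    setIntegral_congr_fun hXi fun a (ha : X a = i) => by rw [ha]
  rw [hfreeze, hfreeze, integral_mul_const, integral_mul_const, hfiber,
    setIntegral_congr_fun hXi fun a (ha : X a = i) => by rw [ha], setIntegral_const, smul_eq_mul]
  ring

theorem integral_mul_sub_eq_neg_of_identDistrib {X Y : Ω → α} {f s : α → ℝ} {C : ℝ}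
    (hXY : IdentDistrib X Y μ μ) (hf : Measurable f) (hs : Measurable s) (hsC : ∀ x, ‖s x‖ ≤ C)
    (hfX : Integrable (fun a => f (X a)) μ) :
    ∫ a, f (Y a) * (s (Y a) - s (X a)) ∂μ = -∫ a, (f (Y a) - f (X a)) * s (X a) ∂μ := by
  have hfY : Integrable (fun a => f (Y a)) μ := (hXY.comp hf).integrable_snd hfX
  have hsX : AEStronglyMeasurable (fun a => s (X a)) μ :=
    (hs.comp_aemeasurable hXY.aemeasurable_fst).aestronglyMeasurable
  have hsY : AEStronglyMeasurable (fun a => s (Y a)) μ :=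
    (hs.comp_aemeasurable hXY.aemeasurable_snd).aestronglyMeasurable
  have hbdd {Z : Ω → α} : ∀ᵐ a ∂μ, ‖s (Z a)‖ ≤ C := .of_forall fun a => hsC (Z a)
  have hstat : ∫ a, f (Y a) * s (Y a) ∂μ = ∫ a, f (X a) * s (X a) ∂μ :=
    ((hXY.comp (hf.mul hs)).integral_eq).symm
  calc ∫ a, f (Y a) * (s (Y a) - s (X a)) ∂μ
      = ∫ a, (f (Y a) * s (Y a) - f (X a) * s (X a) - (f (Y a) - f (X a)) * s (X a)) ∂μ := by
        congr 1; ext a; ring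
    _ = -∫ a, (f (Y a) - f (X a)) * s (X a) ∂μ := by
        rw [integral_sub, integral_sub, hstat, sub_self, zero_sub]
        exacts [hfY.mul_bdd hsY hbdd, hfX.mul_bdd hsX hbdd,
          (hfY.mul_bdd hsY hbdd).sub (hfX.mul_bdd hsX hbdd), (hfY.sub hfX).mul_bdd hsX hbdd]

end

theorem stmt12_general {Ω : Type*} [MeasurableSpace Ω] (μ : Measure Ω) [IsProbabilityMeasure μ]
    (zbar ac as : Ω → ℤ) (hz : Measurable zbar) (hac : Measurable ac) (has : Measurable as)
    (Amax ε τ φmax : ℝ) (φc φs : ℝ → ℝ)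
    (hbmax : ∀ᵐ a ∂μ, |(ac a : ℝ)| ≤ Amax ∧ |(as a : ℝ)| ≤ Amax)
    (hφc : ∀ x, |φc x| ≤ φmax) (hφs : ∀ x, |φs x| ≤ φmax)
    -- steady state has finite mean absolute imbalance
    (hint : Integrable (fun a => (zbar a : ℝ)) μ)
    -- stationarity: the one-step update z̄⁺ has the same distribution as z̄
    (hstat : μ.map (fun a => zbar a + ac a - as a) = μ.map zbar)
    -- conditional means of the arrivals given the state: E[a^c - a^s | z̄ = z] = ε(φ^c - φ^s)(z/τ)
    (hcond : ∀ z : ℤ, ∫ a in zbar ⁻¹' {z}, ((ac a : ℝ) - (as a : ℝ)) ∂μ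
      = ε * (φc ((z : ℝ) / τ) - φs ((z : ℝ) / τ)) * (μ (zbar ⁻¹' {z})).toReal) :
    let sgn : ℤ → ℝ := fun z => if 0 ≤ z then 1 else -1
    let zplus : Ω → ℤ := fun a => zbar a + ac a - as a
    ∫ a, (zplus a : ℝ) * (sgn (zplus a) - sgn (zbar a)) ∂μ
      = -ε * ∫ a, (φc ((zbar a : ℝ) / τ) - φs ((zbar a : ℝ) / τ)) * sgn (zbar a) ∂μ := by
  intro sgn zplus
  have hsgn (z : ℤ) : ‖sgn z‖ ≤ 1 := by by_cases h : 0 ≤ z <;> simp [sgn, h]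
  have hXY : IdentDistrib zbar zplus μ μ :=
    ⟨hz.aemeasurable, ((hz.add hac).sub has).aemeasurable, hstat.symm⟩
  have hincr (a : Ω) : ((zplus a : ℤ) : ℝ) - zbar a = ac a - as a := by
    simp only [zplus]; push_cast; ring
  have harrivals : Integrable (fun a => (ac a : ℝ) - as a) μ := by
    have hcast : Measurable (fun z : ℤ => (z : ℝ)) := measurable_of_countable _
    refine .of_bound ((hcast.comp hac).sub (hcast.comp has)).aestronglyMeasurable (Amax + Amax) ?_
    filter_upwards [hbmax] with a ⟨hca, hsa⟩
    exact (abs_sub _ _).trans (add_le_add hca hsa)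
  have hmean : Integrable (fun a => ε * (φc ((zbar a : ℝ) / τ) - φs ((zbar a : ℝ) / τ))) μ := by
    refine .of_bound ((measurable_of_countable
      (fun z : ℤ => ε * (φc ((z : ℝ) / τ) - φs ((z : ℝ) / τ)))).comp hz).aestronglyMeasurable
      (|ε| * (φmax + φmax)) (.of_forall fun a => ?_)
    rw [norm_mul, Real.norm_eq_abs, Real.norm_eq_abs]
    exact mul_le_mul_of_nonneg_left ((abs_sub _ _).trans (add_le_add (hφc _) (hφs _)))
      (abs_nonneg ε)
  rw [integral_mul_sub_eq_neg_of_identDistrib hXY measurable_from_top measurable_from_top hsgn hint]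
  simp only [hincr]
  rw [integral_mul_comp_eq_of_setIntegral_fiber
    (m := fun z : ℤ => ε * (φc ((z : ℝ) / τ) - φs ((z : ℝ) / τ))) hz harrivals hmean hsgn
    fun z => by rw [hcond, measureReal_def]]
  simp only [mul_assoc, integral_const_mul]
  ring

/-- Steady-state drift identity for the test function |z| = z·sgn(z) in the two-sided queue:
E[z̄⁺(sgn(z̄⁺) - sgn(z̄))] = -ε E[(φ^c(z̄/τ) - φ^s(z̄/τ)) sgn(z̄)]. -/
theorem stmt12 {Ω : Type*} [MeasurableSpace Ω] (μ : Measure Ω) [IsProbabilityMeasure μ]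
    (zbar ac as : Ω → ℤ) (hz : Measurable zbar) (hac : Measurable ac) (has : Measurable as)
    (Amax ε τ φmax δ K : ℝ) (φc φs : ℝ → ℝ)
    (hε : 0 < ε) (hτ : 0 < τ) (hδ : 0 < δ) (hK : 0 < K)
    (hbmax : ∀ᵐ a ∂μ, |(ac a : ℝ)| ≤ Amax ∧ |(as a : ℝ)| ≤ Amax)
    (hφc : ∀ x, |φc x| ≤ φmax) (hφs : ∀ x, |φs x| ≤ φmax)
    (hdrift1 : ∀ x > K, φc x - φs x < -δ) (hdrift2 : ∀ x < -K, δ < φc x - φs x)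
    -- steady state has finite mean absolute imbalance
    (hint : Integrable (fun a => (zbar a : ℝ)) μ)
    -- stationarity: the one-step update z̄⁺ has the same distribution as z̄
    (hstat : μ.map (fun a => zbar a + ac a - as a) = μ.map zbar)
    -- conditional means of the arrivals given the state: E[a^c - a^s | z̄ = z] = ε(φ^c - φ^s)(z/τ)
    (hcond : ∀ z : ℤ, ∫ a in zbar ⁻¹' {z}, ((ac a : ℝ) - (as a : ℝ)) ∂μ
      = ε * (φc ((z : ℝ) / τ) - φs ((z : ℝ) / τ)) * (μ (zbar ⁻¹' {z})).toReal) :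
    let sgn : ℤ → ℝ := fun z => if 0 ≤ z then 1 else -1
    let zplus : Ω → ℤ := fun a => zbar a + ac a - as a
    ∫ a, (zplus a : ℝ) * (sgn (zplus a) - sgn (zbar a)) ∂μ
      = -ε * ∫ a, (φc ((zbar a : ℝ) / τ) - φs ((zbar a : ℝ) / τ)) * sgn (zbar a) ∂μ :=
  stmt12_general μ zbar ac as hz hac has Amax ε τ φmax φc φs hbmax hφc hφs hint hstat hcond
end

section
/- Let g: ℝ → ℝ be continuous and bounded with g(x) ≥ δ > 0 for x > K, let G(x) = ∫₀ˣ g(t) dt, Z = ∫₀^∞ e^{-G(x)} dx < ∞, and let Q be a random variable with density ρ(x) = (1/Z)·e^{-G(x)}·1{x ≥ 0}. Then for every ω ∈ ℝ, E[e^{jωQ} g(Q)] - jω·E[e^{jωQ}] = 1/Z = ρ(0). -/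
open MeasureTheory Real Filter

/-- The one-sided Gibbs distribution with density (1/Z)e^{-∫₀ˣ g}·1{x ≥ 0} satisfies the
functional equation E[e^{jωQ} g(Q)] - jω E[e^{jωQ}] = 1/Z = ρ(0). -/
theorem stmt18 (g : ℝ → ℝ) (gmax δ K : ℝ) (hg : Continuous g) (hgb : ∀ x, |g x| ≤ gmax)
    (hδ : 0 < δ) (hK : 0 < K) (hpos : ∀ x > K, δ ≤ g x)
    (hint : IntegrableOn (fun x => Real.exp (-(∫ t in (0:ℝ)..x, g t))) (Set.Ici 0))
    (Z : ℝ) (hZ : Z = ∫ x in Set.Ici (0:ℝ), Real.exp (-(∫ t in (0:ℝ)..x, g t))) (ω : ℝ) :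
    (∫ x in Set.Ici (0:ℝ),
        Complex.exp (Complex.I * ω * x) * (g x) *
          ((1 / Z) * Real.exp (-(∫ t in (0:ℝ)..x, g t)) : ℝ))
      - Complex.I * ω *
        ∫ x in Set.Ici (0:ℝ),
          Complex.exp (Complex.I * ω * x) *
            ((1 / Z) * Real.exp (-(∫ t in (0:ℝ)..x, g t)) : ℝ)
    = 1 / (Z : ℂ) := by
  set G : ℝ → ℝ := fun x => ∫ t in (0:ℝ)..x, g t with hGdef
  have hGx : ∀ x, (∫ t in (0:ℝ)..x, g t) = G x := fun _ => rfl
  have hGderiv : ∀ x, HasDerivAt G (g x) x := fun x =>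
    (hg.integral_hasStrictDerivAt 0 x).hasDerivAt
  have hGdiff : Differentiable ℝ G := fun x => (hGderiv x).differentiableAt
  have hGcont : Continuous G := hGdiff.continuous
  set f : ℝ → ℂ := fun x => Complex.exp (Complex.I * ω * x) * (Real.exp (-(G x)) : ℝ)
    with hfdef
  have hfcont : Continuous f := by
    apply Continuous.mul
    · exact Complex.continuous_exp.comp (continuous_const.mul Complex.continuous_ofReal)
    · exact Complex.continuous_ofReal.comp (Real.continuous_exp.comp hGcont.neg)
  have hnorm : ∀ x, ‖f x‖ = Real.exp (-(G x)) := by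
    intro x
    simp [hfdef, Complex.norm_exp, Complex.mul_re]
  have hfderiv : ∀ x, HasDerivAt f ((Complex.I * ω - g x) * f x) x := by
    intro x
    have h1 : HasDerivAt (fun y : ℝ => Complex.I * ω * y) (Complex.I * ω) x := by
      simpa using (Complex.ofRealCLM.hasDerivAt (x := x)).const_mul (Complex.I * ω)
    have h2 := h1.cexp
    have h3 : HasDerivAt (fun y => Real.exp (-(G y))) (Real.exp (-(G x)) * -(g x)) x :=
      ((hGderiv x).neg).exp
    have h4 := h3.ofReal_comp
    have h5 : HasDerivAt f _ x := h2.mul h4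
    convert h5 using 1
    simp only [hfdef]
    push_cast
    ring
  -- g ≥ δ on [K, ∞)
  have hpos' : ∀ x, K ≤ x → δ ≤ g x := by
    intro x hx
    rcases eq_or_lt_of_le hx with h | h
    · subst h
      have ht : Tendsto g (nhdsWithin K (Set.Ioi K)) (nhds (g K)) :=
        (hg.continuousAt).continuousWithinAt
      refine ge_of_tendsto ht ?_
      filter_upwards [self_mem_nhdsWithin] with y hy
      exact hpos y hy
    · exact hpos x h
  have hGlin : ∀ x, K ≤ x → G K + δ * (x - K) ≤ G x := by
    intro x hx
    have hadd : G K + ∫ t in K..x, g t = G x :=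
      intervalIntegral.integral_add_adjacent_intervals
        (hg.intervalIntegrable 0 K) (hg.intervalIntegrable K x)
    have hmono : ∫ t in K..x, (δ : ℝ) ≤ ∫ t in K..x, g t := by
      apply intervalIntegral.integral_mono_on hx (intervalIntegrable_const)
        (hg.intervalIntegrable K x)
      intro t ht
      exact hpos' t ht.1
    rw [intervalIntegral.integral_const, smul_eq_mul, mul_comm] at hmono
    linarith
  have hGtop : Tendsto G atTop atTop := by
    have hle : (fun x => G K + δ * (x - K)) ≤ᶠ[atTop] G := by
      filter_upwards [eventually_ge_atTop K] with x hx
      exact hGlin x hx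
    have hlin : Tendsto (fun x : ℝ => G K + δ * (x - K)) atTop atTop := by
      apply tendsto_atTop_add_const_left
      have h1 : Tendsto (fun x : ℝ => x - K) atTop atTop :=
        tendsto_atTop_add_const_right atTop (-K) tendsto_id
      exact h1.const_mul_atTop hδ
    exact tendsto_atTop_mono' atTop hle hlin
  have hftop : Tendsto f atTop (nhds 0) := by
    rw [tendsto_zero_iff_norm_tendsto_zero]
    simp_rw [hnorm]
    exact Real.tendsto_exp_atBot.comp (tendsto_neg_atTop_atBot.comp hGtop)
  -- integrability
  have hint' : IntegrableOn (fun x => Real.exp (-(G x))) (Set.Ioi 0) :=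
    hint.mono_set Set.Ioi_subset_Ici_self
  have hgmax : 0 ≤ gmax := le_trans (abs_nonneg _) (hgb 0)
  have hf_int : IntegrableOn f (Set.Ioi 0) := by
    refine hint'.mono' hfcont.aestronglyMeasurable.restrict ?_
    exact Eventually.of_forall fun x => (hnorm x).le
  have hgf_int : IntegrableOn (fun x => (g x : ℂ) * f x) (Set.Ioi 0) := by
    refine (hint'.const_mul gmax).mono'
      ((Complex.continuous_ofReal.comp hg).mul hfcont).aestronglyMeasurable.restrict ?_
    refine Eventually.of_forall fun x => ?_
    rw [norm_mul, hnorm, Complex.norm_real]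
    exact mul_le_mul_of_nonneg_right (hgb x) (Real.exp_nonneg _)
  have hf'_int : IntegrableOn (fun x => (Complex.I * ω - g x) * f x) (Set.Ioi 0) := by
    refine (hint'.const_mul (|ω| + gmax)).mono'
      (((continuous_const.sub (Complex.continuous_ofReal.comp hg)).mul
        hfcont).aestronglyMeasurable.restrict) ?_
    refine Eventually.of_forall fun x => ?_
    rw [norm_mul, hnorm]
    refine mul_le_mul_of_nonneg_right ?_ (Real.exp_nonneg _)
    calc ‖Complex.I * ω - (g x : ℂ)‖ ≤ ‖Complex.I * (ω:ℂ)‖ + ‖(g x : ℂ)‖ := norm_sub_le _ _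
      _ = |ω| + |g x| := by simp
      _ ≤ |ω| + gmax := by linarith [hgb x]
  -- integration by parts
  have hf0 : f 0 = 1 := by
    simp [hfdef, hGdef]
  have hibp : ∫ x in Set.Ioi (0:ℝ), (Complex.I * ω - g x) * f x = 0 - f 0 :=
    integral_Ioi_of_hasDerivAt_of_tendsto hfcont.continuousWithinAt
      (fun x _ => hfderiv x) hf'_int hftop
  have hsplitfun : (fun x => (Complex.I * ω - g x) * f x)
      = fun x => Complex.I * ω * f x - (g x : ℂ) * f x := by
    funext x; ring
  rw [hsplitfun, integral_sub (hf_int.const_mul _) hgf_int, integral_const_mul, hf0] at hibp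
  have hkey : (∫ x in Set.Ioi (0:ℝ), (g x : ℂ) * f x)
      - Complex.I * ω * ∫ x in Set.Ioi (0:ℝ), f x = 1 := by
    have := hibp
    linear_combination -this
  -- rewrite the goal
  rw [integral_Ici_eq_integral_Ioi, integral_Ici_eq_integral_Ioi]
  simp_rw [hGx]
  have h1 : (fun x : ℝ => Complex.exp (Complex.I * ω * x) * (g x) *
      ((1 / Z * Real.exp (-(G x)) : ℝ) : ℂ))
      = fun x => (1 / (Z:ℂ)) * ((g x : ℂ) * f x) := by
    funext x
    simp only [hfdef]
    push_cast
    ring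
  have h2 : (fun x : ℝ => Complex.exp (Complex.I * ω * x) *
      ((1 / Z * Real.exp (-(G x)) : ℝ) : ℂ))
      = fun x => (1 / (Z:ℂ)) * f x := by
    funext x
    simp only [hfdef]
    push_cast
    ring
  rw [h1, h2, integral_const_mul, integral_const_mul]
  linear_combination (1 / (Z:ℂ)) * hkey
end
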